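/- arXiv:1102.0700 — 8 statements merged into one kernel-verified Lean document; each statement's English description precedes it below -/
import Mathlib

section
/- Let (H^{2m+1}_{2k+1}) be a genus-1 chain. Then the anomaly relations hold: 5H^3_5 − 3H^5_3 = −(H^3_1)² + H^3_3·H^3_{−1}, and 7H^3_7 − 3H^7_3 = (1/2)H^3_{−1}·(H^3_1)² − 2H^3_3·(H^3_{−1})² − H^3_1·H^3_3. -/
/-- Genus-1 chain (stratum Σ₂ of Gr^(2)): `H m j` represents `H^{2(m+1)+1}_{2(j-1)+1}`,
i.e. row index `2m+3 ∈ {3,5,7,…}` and column index `2j−1 ∈ {−1,1,3,…}`.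
(C1) says `p₃² = λ³ + u₂λ² + u₁λ + u₀`, and (C2) says
`p_{2m+3} = λ·p_{2m+1} − H^{2m+1}_{−1}·p₃`. -/
def Genus1Chain (H : ℕ → ℕ → ℂ) : Prop :=
  (∀ n : ℕ, 1 ≤ n →
    2 * H 0 (n + 2) + 2 * H 0 0 * H 0 (n + 1)
      + ∑ i ∈ Finset.range n, H 0 (i + 1) * H 0 (n - i) = 0) ∧
  (∀ m j : ℕ, H (m + 1) j = H m (j + 1) - H m 0 * H 0 j)

/-!
Both relations are polynomial identities among the first coefficients of `p₃`. The recursion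
(C2) expresses `H^5_3` and `H^7_3` through row `3`, and the first two equations of (C1), the
vanishing of the `λ⁻¹` and `λ⁻²` coefficients of `p₃²`, then eliminate `H^3_5` and `H^3_7`.
-/

namespace Genus1Chain

variable {H : ℕ → ℕ → ℂ}

theorem sq_coeff_lambda_neg_one (hH : Genus1Chain H) :
    2 * H 0 3 + 2 * H 0 0 * H 0 2 + H 0 1 ^ 2 = 0 := by
  have h := hH.1 1 le_rfl
  simp only [Finset.sum_range_succ, Finset.sum_range_zero] at h
  linear_combination h

theorem sq_coeff_lambda_neg_two (hH : Genus1Chain H) :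
    2 * H 0 4 + 2 * H 0 0 * H 0 3 + 2 * H 0 1 * H 0 2 = 0 := by
  have h := hH.1 2 (by norm_num)
  simp only [Finset.sum_range_succ, Finset.sum_range_zero] at h
  linear_combination h

theorem row_five_coeff_three (hH : Genus1Chain H) : H 1 2 = H 0 3 - H 0 0 * H 0 2 :=
  hH.2 0 2

theorem row_seven_coeff_three (hH : Genus1Chain H) :
    H 2 2 = H 0 4 - H 0 0 * H 0 3 - (H 0 1 - H 0 0 ^ 2) * H 0 2 := by
  linear_combination hH.2 1 2 + hH.2 0 3 - H 0 2 * hH.2 0 0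

theorem anomaly_row_five (hH : Genus1Chain H) :
    5 * H 0 3 - 3 * H 1 2 = -(H 0 1)^2 + H 0 2 * H 0 0 := by
  linear_combination hH.sq_coeff_lambda_neg_one - 3 * hH.row_five_coeff_three

theorem anomaly_row_seven (hH : Genus1Chain H) :
    7 * H 0 4 - 3 * H 2 2
      = (1/2) * H 0 0 * (H 0 1)^2 - 2 * H 0 2 * (H 0 0)^2 - H 0 1 * H 0 2 := by
  linear_combination 2 * hH.sq_coeff_lambda_neg_two - (H 0 0 / 2) * hH.sq_coeff_lambda_neg_one
    - 3 * hH.row_seven_coeff_three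

end Genus1Chain

/-- The anomaly relations for a genus-1 chain (`H 0 3 = H^3_5`, `H 0 4 = H^3_7`,
`H 1 2 = H^5_3`, `H 2 2 = H^7_3`):
`5H^3_5 − 3H^5_3 = −(H^3_1)² + H^3_3H^3_{−1}` and
`7H^3_7 − 3H^7_3 = (1/2)H^3_{−1}(H^3_1)² − 2H^3_3(H^3_{−1})² − H^3_1H^3_3`. -/
theorem genus1_anomaly (H : ℕ → ℕ → ℂ) (hH : Genus1Chain H) :
    5 * H 0 3 - 3 * H 1 2 = -(H 0 1)^2 + H 0 2 * H 0 0 ∧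
    7 * H 0 4 - 3 * H 2 2
      = (1/2) * H 0 0 * (H 0 1)^2 - 2 * H 0 2 * (H 0 0)^2 - H 0 1 * H 0 2 :=
  ⟨hH.anomaly_row_five, hH.anomaly_row_seven⟩
end

section
/- There exists a family of polynomials P_{m,k} ∈ ℂ[X,Y,Z], indexed by m ≥ 1 and k ≥ −1 and independent of the chain, such that every genus-1 chain satisfies H^{2m+1}_{2k+1} = P_{m,k}(H^3_{−1}, H^3_1, H^3_3) for all m ≥ 1 and k ≥ −1. In other words, a genus-1 chain is completely determined by the three values H^3_{−1}, H^3_1, H^3_3 through universal polynomial formulas (the variety W_{1c} is three-dimensional). -/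
/-!
Solving (C1) for its leading term `2 H^3_{2n+3}` expresses each coefficient of `p₃` through earlier
ones, so by strong induction all of them are universal polynomials in `H^3_{-1}, H^3_1, H^3_3`;
(C2) then propagates this from each row to the next.
-/

open MvPolynomial

noncomputable def row0Poly : ℕ → MvPolynomial (Fin 3) ℂ
  | 0 => X 0
  | 1 => X 1
  | 2 => X 2
  | n + 3 => -(X 0 * row0Poly (n + 2))
      - C 2⁻¹ * ∑ i : Fin (n + 1), row0Poly (i + 1) * row0Poly (n + 1 - i)
  decreasing_by all_goals omega

noncomputable def chainPoly : ℕ → ℕ → MvPolynomial (Fin 3) ℂ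
  | 0 => row0Poly
  | m + 1 => fun k => chainPoly m (k + 1) - chainPoly m 0 * row0Poly k

theorem eval_row0Poly_add_three (v : Fin 3 → ℂ) (n : ℕ) :
    eval v (row0Poly (n + 3)) = -(v 0 * eval v (row0Poly (n + 2)))
      - 2⁻¹ * ∑ i ∈ Finset.range (n + 1),
        eval v (row0Poly (i + 1)) * eval v (row0Poly (n + 1 - i)) := by
  rw [row0Poly, ← Fin.sum_univ_eq_sum_range
    (fun i => eval v (row0Poly (i + 1)) * eval v (row0Poly (n + 1 - i)))]
  simp only [map_sub, map_neg, map_mul, map_sum, eval_C, eval_X]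

namespace Genus1Chain

variable {H : ℕ → ℕ → ℂ}

theorem row0_add_three (hH : Genus1Chain H) (n : ℕ) :
    H 0 (n + 3) = -(H 0 0 * H 0 (n + 2))
      - 2⁻¹ * ∑ i ∈ Finset.range (n + 1), H 0 (i + 1) * H 0 (n + 1 - i) := by
  linear_combination 2⁻¹ * hH.1 (n + 1) n.succ_pos

theorem row0_eq_eval (hH : Genus1Chain H) (k : ℕ) :
    H 0 k = eval ![H 0 0, H 0 1, H 0 2] (row0Poly k) := by
  induction k using Nat.strong_induction_on with
  | _ k ih =>
    match k with
    | 0 | 1 | 2 => simp [row0Poly]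
    | n + 3 =>
      rw [hH.row0_add_three, eval_row0Poly_add_three, ih (n + 2) (by omega)]
      congr 2
      refine Finset.sum_congr rfl fun i hi => ?_
      have hi : i < n + 1 := Finset.mem_range.mp hi
      rw [ih (i + 1) (by omega), ih (n + 1 - i) (by omega)]

theorem eq_eval_chainPoly (hH : Genus1Chain H) (m k : ℕ) :
    H m k = eval ![H 0 0, H 0 1, H 0 2] (chainPoly m k) := by
  induction m generalizing k with
  | zero => exact hH.row0_eq_eval k
  | succ m ih =>
    rw [hH.2, chainPoly, map_sub, map_mul, ← ih, ← ih, ← hH.row0_eq_eval]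

end Genus1Chain

/-- A genus-1 chain is completely determined by the three values
`H^3_{−1} = H 0 0`, `H^3_1 = H 0 1`, `H^3_3 = H 0 2` through universal polynomial
formulas: the variety `W₁c` is three-dimensional. -/
theorem genus1_three_dimensional :
    ∃ P : ℕ → ℕ → MvPolynomial (Fin 3) ℂ,
      ∀ H : ℕ → ℕ → ℂ, Genus1Chain H →
        ∀ m k : ℕ, H m k = MvPolynomial.eval ![H 0 0, H 0 1, H 0 2] (P m k) :=
  ⟨chainPoly, fun _ hH => hH.eq_eval_chainPoly⟩
end

section
/- Let a, b, c : ℝ² → ℝ be continuously differentiable functions of (x₃,x₅) satisfying ∂a/∂x₅ = ∂(b − a²)/∂x₃, ∂b/∂x₅ = ∂(c − a·b)/∂x₃, and ∂c/∂x₅ = ∂(−(1/2)b² − 2a·c)/∂x₃. Define u₂ := 2a, u₁ := 2b + a², u₀ := 2c + 2a·b. Then (u₀,u₁,u₂) satisfies the dispersionless coupled KdV system: ∂u₂/∂x₅ = −(3/2)·(∂u₂/∂x₃)·u₂ + ∂u₁/∂x₃, ∂u₁/∂x₅ = ∂u₀/∂x₃ − (1/2)·(∂u₁/∂x₃)·u₂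 − (∂u₂/∂x₃)·u₁, and ∂u₀/∂x₅ = −(1/2)·(∂u₀/∂x₃)·u₂ − (∂u₂/∂x₃)·u₀. -/
/-- Partial derivative in the `x₃` direction on `ℝ²` with coordinates `(x₃, x₅)`. -/
noncomputable def pd3 (F : ℝ × ℝ → ℝ) : ℝ × ℝ → ℝ := fun p => fderiv ℝ F p (1, 0)

/-- Partial derivative in the `x₅` direction on `ℝ²` with coordinates `(x₃, x₅)`. -/
noncomputable def pd5 (F : ℝ × ℝ → ℝ) : ℝ × ℝ → ℝ := fun p => fderiv ℝ F p (0, 1)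

/-- If `a = H^3_{−1}`, `b = H^3_1`, `c = H^3_3` satisfy the closedness conditions
`∂a/∂x₅ = ∂(b−a²)/∂x₃`, `∂b/∂x₅ = ∂(c−ab)/∂x₃`, `∂c/∂x₅ = ∂(−(1/2)b²−2ac)/∂x₃`,
then `u₂ := 2a`, `u₁ := 2b + a²`, `u₀ := 2c + 2ab` satisfy the dispersionless
coupled KdV system. -/
theorem dcKdV_from_closedness (a b c : ℝ × ℝ → ℝ)
    (ha : ContDiff ℝ 1 a) (hb : ContDiff ℝ 1 b) (hc : ContDiff ℝ 1 c)
    (h1 : ∀ p, pd5 a p = pd3 (fun q => b q - (a q)^2) p)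
    (h2 : ∀ p, pd5 b p = pd3 (fun q => c q - a q * b q) p)
    (h3 : ∀ p, pd5 c p = pd3 (fun q => -(1/2) * (b q)^2 - 2 * a q * c q) p) :
    (∀ p, pd5 (fun q => 2 * a q) p
        = -(3/2) * pd3 (fun q => 2 * a q) p * (2 * a p)
          + pd3 (fun q => 2 * b q + (a q)^2) p) ∧
    (∀ p, pd5 (fun q => 2 * b q + (a q)^2) p
        = pd3 (fun q => 2 * c q + 2 * a q * b q) p
          - (1/2) * pd3 (fun q => 2 * b q + (a q)^2) p * (2 * a p)
          - pd3 (fun q => 2 * a q) p * (2 * b p + (a p)^2)) ∧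
    (∀ p, pd5 (fun q => 2 * c q + 2 * a q * b q) p
        = -(1/2) * pd3 (fun q => 2 * c q + 2 * a q * b q) p * (2 * a p)
          - pd3 (fun q => 2 * a q) p * (2 * c p + 2 * a p * b p)) := by
  have Da : Differentiable ℝ a := ha.differentiable one_ne_zero
  have Db : Differentiable ℝ b := hb.differentiable one_ne_zero
  have Dc : Differentiable ℝ c := hc.differentiable one_ne_zero
  simp (disch := fun_prop) only [pd3, pd5, fderiv_fun_add, fderiv_fun_sub, fderiv_const_mul,
    fderiv_fun_mul, fderiv_fun_pow, add_apply, sub_apply, smul_apply, smul_eq_mul]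
    at h1 h2 h3 ⊢
  -- By the product rule `∂₅u₂ = 2 ∂₅a`, `∂₅u₁ = 2 ∂₅b + 2a ∂₅a`, `∂₅u₀ = 2 ∂₅c + 2b ∂₅a + 2a ∂₅b`,
  -- which fixes the coefficients of the closedness conditions below.
  refine ⟨fun p => ?_, fun p => ?_, fun p => ?_⟩
  · linear_combination 2 * h1 p
  · linear_combination 2 * h2 p + 2 * a p * h1 p
  · linear_combination 2 * h3 p + 2 * b p * h1 p + 2 * a p * h2 p
end

section
/- Let u₀, u₁, u₂ : ℝ² → ℝ be continuously differentiable functions of (x₃,x₅) satisfying the dispersionless coupled KdV system: ∂u₂/∂x₅ = −(3/2)·(∂u₂/∂x₃)·u₂ + ∂u₁/∂x₃, ∂u₁/∂x₅ = ∂u₀/∂x₃ − (1/2)·(∂u₁/∂x₃)·u₂ − (∂u₂/∂x₃)·u₁, ∂u₀/∂x₅ = −(1/2)·(∂u₀/∂x₃)·u₂ − (∂u₂/∂x₃)·u₀. Define the moduli g₂ := u₁ − (1/3)u₂² and g₃ := u₀ + (2/27)u₂³ − (1/3)u₁u₂. Then: ∂g₂/∂x₅ = ∂g₃/∂x₃ −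 (5/6)·(∂g₂/∂x₃)·u₂ − (2/3)·(∂u₂/∂x₃)·g₂, ∂g₃/∂x₅ = −(5/6)·(∂g₃/∂x₃)·u₂ − (1/3)·(∂g₂/∂x₃)·g₂ − (∂u₂/∂x₃)·g₃, and ∂u₂/∂x₅ = ∂g₂/∂x₃ − (5/6)·(∂u₂/∂x₃)·u₂. -/
/-! Along any direction `v`, `F ↦ fderiv ℝ F p v` is a derivation, so the derivatives of
`g₂` and `g₃` are polynomials in `u₀, u₁, u₂` and their derivatives. Substituting the three flow
equations for the `x₅`-derivatives turns each claimed evolution law into a polynomial identity. -/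

section ModuliDerivatives

open ContinuousLinearMap

variable {E : Type*} [NormedAddCommGroup E] [NormedSpace ℝ E] {u₀ u₁ u₂ : E → ℝ} {p : E}

theorem fderiv_moduli_g₂_apply (hu₁ : DifferentiableAt ℝ u₁ p) (hu₂ : DifferentiableAt ℝ u₂ p)
    (v : E) :
    fderiv ℝ (fun q => u₁ q - (1/3) * (u₂ q)^2) p v
      = fderiv ℝ u₁ p v - (2/3) * u₂ p * fderiv ℝ u₂ p v := by
  rw [fderiv_fun_sub hu₁ (by fun_prop), fderiv_const_mul (by fun_prop), fderiv_fun_pow 2 hu₂]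
  simp only [sub_apply, smul_apply, smul_eq_mul, nsmul_eq_mul]
  ring

theorem fderiv_moduli_g₃_apply (hu₀ : DifferentiableAt ℝ u₀ p) (hu₁ : DifferentiableAt ℝ u₁ p)
    (hu₂ : DifferentiableAt ℝ u₂ p) (v : E) :
    fderiv ℝ (fun q => u₀ q + (2/27) * (u₂ q)^3 - (1/3) * u₁ q * u₂ q) p v
      = fderiv ℝ u₀ p v + (2/9) * u₂ p ^ 2 * fderiv ℝ u₂ p v
        - (1/3) * (u₂ p * fderiv ℝ u₁ p v + u₁ p * fderiv ℝ u₂ p v) := by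
  rw [fderiv_fun_sub (by fun_prop) (by fun_prop), fderiv_fun_add hu₀ (by fun_prop),
    fderiv_const_mul (by fun_prop), fderiv_fun_pow 3 hu₂, fderiv_fun_mul (hu₁.const_mul _) hu₂,
    fderiv_const_mul hu₁]
  simp only [sub_apply, add_apply, smul_apply, smul_eq_mul, nsmul_eq_mul]
  ring

end ModuliDerivatives

/-- If `u₀,u₁,u₂` satisfy the dispersionless coupled KdV system, then the
Weierstrass moduli `g₂ := u₁ − (1/3)u₂²`, `g₃ := u₀ + (2/27)u₂³ − (1/3)u₁u₂`
satisfy the stated evolution equations. -/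
theorem dcKdV_moduli_evolution (u₀ u₁ u₂ : ℝ × ℝ → ℝ)
    (h0 : ContDiff ℝ 1 u₀) (h1 : ContDiff ℝ 1 u₁) (h2 : ContDiff ℝ 1 u₂)
    (e2 : ∀ p, pd5 u₂ p = -(3/2) * pd3 u₂ p * u₂ p + pd3 u₁ p)
    (e1 : ∀ p, pd5 u₁ p = pd3 u₀ p - (1/2) * pd3 u₁ p * u₂ p - pd3 u₂ p * u₁ p)
    (e0 : ∀ p, pd5 u₀ p = -(1/2) * pd3 u₀ p * u₂ p - pd3 u₂ p * u₀ p) :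
    (∀ p, pd5 (fun q => u₁ q - (1/3) * (u₂ q)^2) p
        = pd3 (fun q => u₀ q + (2/27) * (u₂ q)^3 - (1/3) * u₁ q * u₂ q) p
          - (5/6) * pd3 (fun q => u₁ q - (1/3) * (u₂ q)^2) p * u₂ p
          - (2/3) * pd3 u₂ p * (u₁ p - (1/3) * (u₂ p)^2)) ∧
    (∀ p, pd5 (fun q => u₀ q + (2/27) * (u₂ q)^3 - (1/3) * u₁ q * u₂ q) p
        = -(5/6) * pd3 (fun q => u₀ q + (2/27) * (u₂ q)^3 - (1/3) * u₁ q * u₂ q) p * u₂ p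
          - (1/3) * pd3 (fun q => u₁ q - (1/3) * (u₂ q)^2) p * (u₁ p - (1/3) * (u₂ p)^2)
          - pd3 u₂ p * (u₀ p + (2/27) * (u₂ p)^3 - (1/3) * u₁ p * u₂ p)) ∧
    (∀ p, pd5 u₂ p
        = pd3 (fun q => u₁ q - (1/3) * (u₂ q)^2) p - (5/6) * pd3 u₂ p * u₂ p) := by
  have hu₀ := h0.differentiable one_ne_zero
  have hu₁ := h1.differentiable one_ne_zero
  have hu₂ := h2.differentiable one_ne_zero
  simp only [pd3, pd5] at e0 e1 e2 ⊢
  refine ⟨fun p => ?_, fun p => ?_, fun p => ?_⟩ <;>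
  · simp only [fderiv_moduli_g₂_apply (hu₁ p) (hu₂ p),
      fderiv_moduli_g₃_apply (hu₀ p) (hu₁ p) (hu₂ p), e0, e1, e2]
    ring
end

section
/- Let u₁, u₂ : ℝ² → ℝ be continuously differentiable functions of (x₃,x₅) satisfying the dispersionless Jaulent–Miodek system: ∂u₂/∂x₅ = −(3/2)·(∂u₂/∂x₃)·u₂ + ∂u₁/∂x₃ and ∂u₁/∂x₅ = −(1/2)·(∂u₁/∂x₃)·u₂ − (∂u₂/∂x₃)·u₁. Define u := −u₂ and v := −u₁ + (1/4)u₂², and introduce variables x := x₃ and t := −x₅. Then (u,v) satisfies the 1-layer Benney (dispersionless NLS) system: ∂u/∂t + u·∂u/∂x + ∂v/∂x = 0 and ∂v/∂t + ∂(u·v)/∂x = 0. -/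
/-!
Both equations are first-order identities in the derivatives of `u₁, u₂`: expanding
`∂(-u₂)`, `∂(-u₁ + u₂²/4)` and `∂(u v)` by the chain and product rules, the first Benney
equation is the `u₂`-equation of the Jaulent–Miodek system and the second one is the
`u₁`-equation minus `u₂ / 2` times the `u₂`-equation.
-/

section DirectionalDerivatives

variable {E : Type*} [NormedAddCommGroup E] [NormedSpace ℝ E] {f g : E → ℝ} {p : E}

theorem fderiv_neg_apply (w : E) : fderiv ℝ (fun q => -f q) p w = -fderiv ℝ f p w := by
  rw [fderiv_fun_neg, neg_apply]

theorem fderiv_mul_apply (hf : DifferentiableAt ℝ f p) (hg : DifferentiableAt ℝ g p) (w : E) :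
    fderiv ℝ (fun q => f q * g q) p w = fderiv ℝ f p w * g p + f p * fderiv ℝ g p w := by
  rw [fderiv_fun_mul hf hg]
  simp only [add_apply, smul_apply, smul_eq_mul]
  ring

theorem fderiv_neg_add_quarter_sq_apply (hf : DifferentiableAt ℝ f p)
    (hg : DifferentiableAt ℝ g p) (w : E) :
    fderiv ℝ (fun q => -f q + (1/4) * g q ^ 2) p w
      = -fderiv ℝ f p w + (1/2) * g p * fderiv ℝ g p w := by
  rw [fderiv_fun_add hf.fun_neg ((hg.fun_pow 2).const_mul _), fderiv_fun_neg,
    fderiv_const_mul (hg.fun_pow 2), fderiv_fun_pow 2 hg]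
  simp only [add_apply, neg_apply, smul_apply, smul_eq_mul, nsmul_eq_mul]
  ring

end DirectionalDerivatives

/-- If `u₁,u₂` satisfy the dispersionless Jaulent–Miodek system, then
`u := −u₂`, `v := −u₁ + (1/4)u₂²` satisfy the 1-layer Benney (dispersionless NLS)
system in the variables `x := x₃`, `t := −x₅` (so `∂/∂t = −∂/∂x₅`). -/
theorem benney_from_jaulentMiodek (u₁ u₂ : ℝ × ℝ → ℝ)
    (h1 : ContDiff ℝ 1 u₁) (h2 : ContDiff ℝ 1 u₂)
    (e2 : ∀ p, pd5 u₂ p = -(3/2) * pd3 u₂ p * u₂ p + pd3 u₁ p)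
    (e1 : ∀ p, pd5 u₁ p = -(1/2) * pd3 u₁ p * u₂ p - pd3 u₂ p * u₁ p) :
    (∀ p, -(pd5 (fun q => -u₂ q) p)
        + (-u₂ p) * pd3 (fun q => -u₂ q) p
        + pd3 (fun q => -u₁ q + (1/4) * (u₂ q)^2) p = 0) ∧
    (∀ p, -(pd5 (fun q => -u₁ q + (1/4) * (u₂ q)^2) p)
        + pd3 (fun q => (-u₂ q) * (-u₁ q + (1/4) * (u₂ q)^2)) p = 0) := by
  have d1 : Differentiable ℝ u₁ := h1.differentiable one_ne_zero
  have d2 : Differentiable ℝ u₂ := h2.differentiable one_ne_zero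
  simp only [pd3, pd5] at e1 e2 ⊢
  refine ⟨fun p => ?_, fun p => ?_⟩
  · rw [fderiv_neg_apply, fderiv_neg_apply, fderiv_neg_add_quarter_sq_apply (d1 p) (d2 p)]
    linear_combination e2 p
  · have dv : DifferentiableAt ℝ (fun q => -u₁ q + (1/4) * u₂ q ^ 2) p :=
      (d1 p).fun_neg.fun_add (((d2 p).fun_pow 2).const_mul _)
    rw [fderiv_mul_apply (d2 p).fun_neg dv, fderiv_neg_apply,
      fderiv_neg_add_quarter_sq_apply (d1 p) (d2 p), fderiv_neg_add_quarter_sq_apply (d1 p) (d2 p)]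
    linear_combination e1 p - (1/2) * u₂ p * e2 p
end

section
/- Let S₋₁, S₁ : ℝ² → ℝ be twice continuously differentiable functions of (x₃,x₅) satisfying ∂S₋₁/∂x₅ = ∂S₁/∂x₃ − (∂S₋₁/∂x₃)² and ∂S₁/∂x₅ = −2·(∂S₁/∂x₃)·(∂S₋₁/∂x₃), and suppose ∂S₁/∂x₃ is nowhere zero. Then ∂²S₁/∂x₅² = ∂/∂x₃ [ −(∂S₁/∂x₃)² + (∂S₁/∂x₅)² / (∂S₁/∂x₃) ]. -/
theorem mul_sq_div_self {K : Type*} [Field K] (c a : K) : (c * a) ^ 2 / a = c ^ 2 * a := by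
  rw [mul_pow, mul_div_assoc, sq a, mul_self_div_self]

section DirectionalDerivative

variable {E F : Type*} [NormedAddCommGroup E] [NormedSpace ℝ E]
  [NormedAddCommGroup F] [NormedSpace ℝ F] {f : E → F}

theorem ContDiff.differentiable_fderiv_apply (hf : ContDiff ℝ 2 f) (v : E) :
    Differentiable ℝ fun x => fderiv ℝ f x v :=
  ((hf.fderiv_right (m := 1) (by norm_num)).clm_apply contDiff_const).differentiable one_ne_zero

theorem ContDiff.fderiv_fderiv_apply_comm (hf : ContDiff ℝ 2 f) (x v w : E) :
    fderiv ℝ (fun y => fderiv ℝ f y v) x w = fderiv ℝ (fun y => fderiv ℝ f y w) x v := by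
  have hd : Differentiable ℝ (fderiv ℝ f) :=
    (hf.fderiv_right (m := 1) (by norm_num)).differentiable one_ne_zero
  rw [fderiv_clm_apply (hd x) (differentiableAt_const v),
    fderiv_clm_apply (hd x) (differentiableAt_const w)]
  simpa using hf.contDiffAt.isSymmSndFDerivAt (by simp) w v

end DirectionalDerivative

theorem ContDiff.differentiable_pd3 {F : ℝ × ℝ → ℝ} (hF : ContDiff ℝ 2 F) :
    Differentiable ℝ (pd3 F) :=
  hF.differentiable_fderiv_apply _

theorem ContDiff.pd5_pd3_comm {F : ℝ × ℝ → ℝ} (hF : ContDiff ℝ 2 F) :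
    pd5 (pd3 F) = pd3 (pd5 F) :=
  funext fun p => hF.fderiv_fderiv_apply_comm p _ _

theorem dNLS_potential_equation_general (Sm S₁ : ℝ × ℝ → ℝ)
    (hSm : ContDiff ℝ 2 Sm) (hS₁ : ContDiff ℝ 2 S₁)
    (e1 : ∀ p, pd5 Sm p = pd3 S₁ p - (pd3 Sm p)^2)
    (e2 : ∀ p, pd5 S₁ p = -2 * pd3 S₁ p * pd3 Sm p) :
    ∀ p, pd5 (pd5 S₁) p
      = pd3 (fun q => -(pd3 S₁ q)^2 + (pd5 S₁ q)^2 / pd3 S₁ q) p := by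
  set a := pd3 S₁
  set b := pd3 Sm
  have ha : Differentiable ℝ a := hS₁.differentiable_pd3
  have hb : Differentiable ℝ b := hSm.differentiable_pd3
  have h5S₁ : pd5 S₁ = fun q => -2 * a q * b q := funext e2
  have h5a : pd5 a = fun q => -2 * (a q * pd3 b q + b q * pd3 a q) := by
    rw [hS₁.pd5_pd3_comm, h5S₁]
    funext q
    simp (disch := fun_prop) [pd3, fderiv_fun_mul]
    ring
  have h5b : pd5 b = fun q => pd3 a q - 2 * b q * pd3 b q := by
    rw [hSm.pd5_pd3_comm, funext e1]
    funext q
    simp (disch := fun_prop) [pd3, fderiv_fun_sub, fderiv_fun_pow]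
  have hbracket :
      (fun q => -(a q)^2 + (pd5 S₁ q)^2 / a q) = fun q => 4 * a q * b q ^ 2 - a q ^ 2 := by
    funext q
    rw [e2, mul_right_comm, mul_sq_div_self]
    ring
  intro p
  have h5ap := congrFun h5a p
  have h5bp := congrFun h5b p
  rw [hbracket, h5S₁]
  simp only [pd3, pd5] at h5ap h5bp ⊢
  simp (disch := fun_prop) [fderiv_fun_mul, fderiv_fun_sub, fderiv_fun_pow]
  linear_combination (-2 * b p) * h5ap + (-2 * a p) * h5bp

/-- If `S₋₁, S₁` satisfy the potential dispersionless NLS system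
`∂S₋₁/∂x₅ = ∂S₁/∂x₃ − (∂S₋₁/∂x₃)²`, `∂S₁/∂x₅ = −2(∂S₁/∂x₃)(∂S₋₁/∂x₃)`, with
`∂S₁/∂x₃` nowhere zero, then
`∂²S₁/∂x₅² = ∂/∂x₃ [ −(∂S₁/∂x₃)² + (∂S₁/∂x₅)²/(∂S₁/∂x₃) ]`. -/
theorem dNLS_potential_equation (Sm S₁ : ℝ × ℝ → ℝ)
    (hSm : ContDiff ℝ 2 Sm) (hS₁ : ContDiff ℝ 2 S₁)
    (e1 : ∀ p, pd5 Sm p = pd3 S₁ p - (pd3 Sm p)^2)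
    (e2 : ∀ p, pd5 S₁ p = -2 * pd3 S₁ p * pd3 Sm p)
    (hne : ∀ p, pd3 S₁ p ≠ 0) :
    ∀ p, pd5 (pd5 S₁) p
      = pd3 (fun q => -(pd3 S₁ q)^2 + (pd5 S₁ q)^2 / pd3 S₁ q) p :=
  dNLS_potential_equation_general Sm S₁ hSm hS₁ e1 e2
end

section
/- Let f : ℝ → ℝ be twice continuously differentiable, and for x₅ ≠ 0 define Φ(x₃,x₅) := f(x₃²/x₅). Then at every point with x₅ ≠ 0, writing y := x₃²/x₅, one has the identity Φ_{x₃x₃}·Φ_{x₅x₅} − (Φ_{x₃x₅})² + (Φ_{x₃x₃})³ = (2/x₅³)·[ y²·f'(y)·f''(y) + 4·( f'(y) + 2y·f''(y) )³ ]. In particular, Φ satisfies the Hirota-type equation Φ_{x₃x₃}Φ_{x₅x₅} − (Φ_{x₃x₅})² + (Φ_{x₃x₃})³ = 0 on {x₅ ≠ 0} if and only if ϕ := f' satisfies the ODE y²·ϕ·ϕ' + 4·(ϕ + 2y·ϕ')³ = 0 for all y ∈ ℝ. -/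
/-- The self-similar ansatz `Φ(x₃,x₅) = f(x₃²/x₅)`. -/
noncomputable def selfSim (f : ℝ → ℝ) : ℝ × ℝ → ℝ := fun p => f (p.1 ^ 2 / p.2)

/-!
Partial derivatives are computed along coordinate lines by the one-variable chain rule. With
`y = x₃²/x₅` one gets `Φ₃₃ = (2/x₅)(f′ + 2y f″)`, `Φ₃₅ = −(2x₃/x₅²)(f′ + y f″)` and
`Φ₅₅ = (y/x₅²)(y f″ + 2f′)`; after `x₃² = y x₅` the `f′²` and `f″²` terms of `Φ₃₃Φ₅₅ − Φ₃₅²`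
cancel, leaving `(2/x₅³) y² f′ f″`. Every `y` is `x₃²/x₅` for some `x₅ ≠ 0`, and `2/x₅³ ≠ 0`,
so the equation for `Φ` is equivalent to the ODE for `f′`.
-/

open Topology

noncomputable def hirota (Φ : ℝ × ℝ → ℝ) (p : ℝ × ℝ) : ℝ :=
  pd3 (pd3 Φ) p * pd5 (pd5 Φ) p - pd5 (pd3 Φ) p ^ 2 + pd3 (pd3 Φ) p ^ 3

section PartialDerivatives

variable {F G : ℝ × ℝ → ℝ} {p : ℝ × ℝ}

lemma pd3_eq_deriv (hF : DifferentiableAt ℝ F p) :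
    pd3 F p = deriv (fun t => F (t, p.2)) p.1 :=
  ((hF.hasFDerivAt.comp_hasDerivAt p.1
    ((hasDerivAt_id p.1).prodMk (hasDerivAt_const p.1 p.2))).deriv).symm

lemma pd5_eq_deriv (hF : DifferentiableAt ℝ F p) :
    pd5 F p = deriv (fun s => F (p.1, s)) p.2 :=
  ((hF.hasFDerivAt.comp_hasDerivAt p.2
    ((hasDerivAt_const p.2 p.1).prodMk (hasDerivAt_id p.2))).deriv).symm

lemma Filter.EventuallyEq.pd3_eq (h : F =ᶠ[𝓝 p] G) : pd3 F p = pd3 G p := by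
  simp only [pd3, h.fderiv_eq]

lemma Filter.EventuallyEq.pd5_eq (h : F =ᶠ[𝓝 p] G) : pd5 F p = pd5 G p := by
  simp only [pd5, h.fderiv_eq]

end PartialDerivatives

lemma hasDerivAt_comp_sq_div_const {g : ℝ → ℝ} {x c : ℝ}
    (hg : DifferentiableAt ℝ g (x ^ 2 / c)) :
    HasDerivAt (fun t => g (t ^ 2 / c)) (deriv g (x ^ 2 / c) * (2 * x / c)) x :=
  (hg.hasDerivAt.comp x ((hasDerivAt_pow 2 x).div_const c)).congr_deriv (by ring)

lemma hasDerivAt_comp_const_div {g : ℝ → ℝ} {a s : ℝ} (hs : s ≠ 0)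
    (hg : DifferentiableAt ℝ g (a / s)) :
    HasDerivAt (fun s => g (a / s)) (-(deriv g (a / s) * (a / s ^ 2))) s :=
  (hg.hasDerivAt.comp s ((hasDerivAt_inv hs).const_mul a)).congr_deriv (by ring)

section SelfSimilar

variable {f : ℝ → ℝ} {p : ℝ × ℝ}

lemma differentiableAt_selfSim (hf : Differentiable ℝ f) (hp : p.2 ≠ 0) :
    DifferentiableAt ℝ (selfSim f) p := by
  unfold selfSim
  fun_prop (disch := assumption)

lemma pd3_selfSim (hf : Differentiable ℝ f) (hp : p.2 ≠ 0) :
    pd3 (selfSim f) p = deriv f (p.1 ^ 2 / p.2) * (2 * p.1 / p.2) := by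
  rw [pd3_eq_deriv (differentiableAt_selfSim hf hp)]
  exact (hasDerivAt_comp_sq_div_const (hf _)).deriv

lemma pd5_selfSim (hf : Differentiable ℝ f) (hp : p.2 ≠ 0) :
    pd5 (selfSim f) p = -(deriv f (p.1 ^ 2 / p.2) * (p.1 ^ 2 / p.2 ^ 2)) := by
  rw [pd5_eq_deriv (differentiableAt_selfSim hf hp)]
  exact (hasDerivAt_comp_const_div (a := p.1 ^ 2) hp (hf _)).deriv

lemma pd3_selfSim_eventuallyEq (hf : Differentiable ℝ f) (hp : p.2 ≠ 0) :
    pd3 (selfSim f) =ᶠ[𝓝 p] fun q => deriv f (q.1 ^ 2 / q.2) * (2 * q.1 / q.2) :=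
  (continuous_snd.continuousAt.eventually_ne hp).mono fun _ hq => pd3_selfSim hf hq

lemma pd5_selfSim_eventuallyEq (hf : Differentiable ℝ f) (hp : p.2 ≠ 0) :
    pd5 (selfSim f) =ᶠ[𝓝 p] fun q => -(deriv f (q.1 ^ 2 / q.2) * (q.1 ^ 2 / q.2 ^ 2)) :=
  (continuous_snd.continuousAt.eventually_ne hp).mono fun _ hq => pd5_selfSim hf hq

variable (hf : Differentiable ℝ f) (hf' : Differentiable ℝ (deriv f))
include hf hf'

lemma pd3_pd3_selfSim (hp : p.2 ≠ 0) :
    pd3 (pd3 (selfSim f)) p = 2 / p.2 * (deriv f (p.1 ^ 2 / p.2)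
      + 2 * (p.1 ^ 2 / p.2) * deriv (deriv f) (p.1 ^ 2 / p.2)) := by
  rw [(pd3_selfSim_eventuallyEq hf hp).pd3_eq, pd3_eq_deriv (by fun_prop (disch := assumption))]
  have h := (hasDerivAt_comp_sq_div_const (c := p.2) (hf' (p.1 ^ 2 / p.2))).mul
    (((hasDerivAt_id' p.1).const_mul 2).div_const p.2)
  exact (h.congr_deriv (by field_simp; ring)).deriv

lemma pd5_pd3_selfSim (hp : p.2 ≠ 0) :
    pd5 (pd3 (selfSim f)) p = -(2 * p.1 / p.2 ^ 2 * (deriv f (p.1 ^ 2 / p.2)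
      + p.1 ^ 2 / p.2 * deriv (deriv f) (p.1 ^ 2 / p.2))) := by
  rw [(pd3_selfSim_eventuallyEq hf hp).pd5_eq, pd5_eq_deriv (by fun_prop (disch := assumption))]
  have h := (hasDerivAt_comp_const_div (a := p.1 ^ 2) hp (hf' _)).mul
    ((hasDerivAt_inv hp).const_mul (2 * p.1))
  exact (h.congr_deriv (by field_simp; ring)).deriv

lemma pd5_pd5_selfSim (hp : p.2 ≠ 0) :
    pd5 (pd5 (selfSim f)) p = p.1 ^ 2 / p.2 / p.2 ^ 2 *
      (p.1 ^ 2 / p.2 * deriv (deriv f) (p.1 ^ 2 / p.2) + 2 * deriv f (p.1 ^ 2 / p.2)) := by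
  rw [(pd5_selfSim_eventuallyEq hf hp).pd5_eq, pd5_eq_deriv (by fun_prop (disch := simp [hp]))]
  have h := ((hasDerivAt_comp_const_div (a := p.1 ^ 2) hp (hf' _)).mul
    (((hasDerivAt_pow 2 p.2).inv (pow_ne_zero 2 hp)).const_mul (p.1 ^ 2))).neg
  exact (h.congr_deriv (by simp only [Pi.inv_apply]; field_simp; ring)).deriv

theorem hirota_selfSim (hp : p.2 ≠ 0) :
    hirota (selfSim f) p = 2 / p.2 ^ 3 *
      ((p.1 ^ 2 / p.2) ^ 2 * deriv f (p.1 ^ 2 / p.2) * deriv (deriv f) (p.1 ^ 2 / p.2)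
        + 4 * (deriv f (p.1 ^ 2 / p.2)
          + 2 * (p.1 ^ 2 / p.2) * deriv (deriv f) (p.1 ^ 2 / p.2)) ^ 3) := by
  rw [hirota, pd3_pd3_selfSim hf hf' hp, pd5_pd3_selfSim hf hf' hp, pd5_pd5_selfSim hf hf' hp]
  field_simp
  ring

end SelfSimilar

lemma exists_sq_div_eq (y : ℝ) : ∃ p : ℝ × ℝ, p.2 ≠ 0 ∧ p.1 ^ 2 / p.2 = y := by
  rcases eq_or_ne y 0 with rfl | hy
  · exact ⟨(0, 1), one_ne_zero, by norm_num⟩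
  · exact ⟨(1, y⁻¹), inv_ne_zero hy, by simp⟩

/-- For a self-similar ansatz `Φ = f(x₃²/x₅)` with `f` C², at every point with
`x₅ ≠ 0` (writing `y = x₃²/x₅`) one has
`Φ_{x₃x₃}Φ_{x₅x₅} − (Φ_{x₃x₅})² + (Φ_{x₃x₃})³
  = (2/x₅³)[y² f′(y) f″(y) + 4(f′(y) + 2y f″(y))³]`;
in particular `Φ` satisfies the Hirota-type equation on `{x₅ ≠ 0}` iff `ϕ := f′`
satisfies the ODE `y²ϕϕ′ + 4(ϕ + 2yϕ′)³ = 0` for all `y`. -/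
theorem selfSimilar_hirota (f : ℝ → ℝ) (hf : ContDiff ℝ 2 f) :
    (∀ p : ℝ × ℝ, p.2 ≠ 0 →
      pd3 (pd3 (selfSim f)) p * pd5 (pd5 (selfSim f)) p
          - (pd5 (pd3 (selfSim f)) p)^2 + (pd3 (pd3 (selfSim f)) p)^3
        = (2 / p.2^3) *
            ((p.1^2 / p.2)^2 * deriv f (p.1^2 / p.2) * deriv (deriv f) (p.1^2 / p.2)
              + 4 * (deriv f (p.1^2 / p.2)
                  + 2 * (p.1^2 / p.2) * deriv (deriv f) (p.1^2 / p.2))^3)) ∧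
    ((∀ p : ℝ × ℝ, p.2 ≠ 0 →
        pd3 (pd3 (selfSim f)) p * pd5 (pd5 (selfSim f)) p
          - (pd5 (pd3 (selfSim f)) p)^2 + (pd3 (pd3 (selfSim f)) p)^3 = 0)
      ↔ (∀ y : ℝ, y^2 * deriv f y * deriv (deriv f) y
          + 4 * (deriv f y + 2 * y * deriv (deriv f) y)^3 = 0)) := by
  have key : ∀ p : ℝ × ℝ, p.2 ≠ 0 → hirota (selfSim f) p = _ := fun p hp =>
    hirota_selfSim (hf.differentiable (by norm_num)) hf.differentiable_deriv_two hp
  refine ⟨key, fun hirota_eq_zero y => ?_, fun hode p hp => ?_⟩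
  · obtain ⟨p, hp, rfl⟩ := exists_sq_div_eq y
    have h := (key p hp).symm.trans (hirota_eq_zero p hp)
    exact (mul_eq_zero.mp h).resolve_left (by positivity)
  · show hirota (selfSim f) p = 0
    rw [key p hp, hode, mul_zero]
end

section
/- Let c ∈ ℝ with c ≠ 0 and let n be a natural number. If the monomial function ϕ(y) = c·yⁿ satisfies y²·ϕ(y)·ϕ'(y) + 4·(ϕ(y) + 2y·ϕ'(y))³ = 0 for all y ∈ ℝ, then n = 1 and c = −1/108. That is, the only nonzero monomial solution of this ODE is ϕ(y) = −y/108. -/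
/-!
For `ϕ = c yⁿ` the left-hand side of the ODE is the two-term polynomial
`c²n y^(2n+1) + 4c³(2n+1)³ y^(3n)`. Two monomials with distinct exponents cannot cancel
identically, and the second coefficient is nonzero for `c ≠ 0`, so the exponents must agree:
`2n + 1 = 3n`, i.e. `n = 1`. Then `c² + 108c³ = 0` gives `c = -1/108`.
-/

/-- Comparing the values at `1` and at `2` separates two monomials of distinct degrees. -/
theorem eq_zero_of_forall_mul_pow_add_mul_pow_eq_zero {K : Type*} [Field K] [LinearOrder K]
    [IsStrictOrderedRing K] {a b : K} {p q : ℕ} (hpq : p ≠ q)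
    (h : ∀ y : K, a * y ^ p + b * y ^ q = 0) : a = 0 ∧ b = 0 := by
  have h1 : a + b = 0 := by simpa using h 1
  have h2 : a * 2 ^ p + b * 2 ^ q = 0 := h 2
  have hpow : (2 : K) ^ p - 2 ^ q ≠ 0 :=
    sub_ne_zero.mpr fun he => hpq (pow_right_injective₀ two_pos (by norm_num) he)
  have ha : a * (2 ^ p - 2 ^ q) = 0 := by linear_combination h2 - 2 ^ q * h1
  have ha0 : a = 0 := (mul_eq_zero.mp ha).resolve_right hpow
  exact ⟨ha0, by linear_combination h1 - ha0⟩

theorem selfSimilar_ODE_lhs_of_monomial (c y : ℝ) (n : ℕ) :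
    y ^ 2 * (c * y ^ n) * deriv (fun t : ℝ => c * t ^ n) y
        + 4 * (c * y ^ n + 2 * y * deriv (fun t : ℝ => c * t ^ n) y) ^ 3
      = c ^ 2 * n * y ^ (2 * n + 1) + 4 * c ^ 3 * (2 * n + 1) ^ 3 * y ^ (3 * n) := by
  rw [deriv_const_mul_field, deriv_pow_field]
  cases n with
  | zero => simp
  | succ m => push_cast; ring

/-- The only nonzero monomial solution `ϕ(y) = c·yⁿ` of the ODE
`y²ϕϕ′ + 4(ϕ + 2yϕ′)³ = 0` is `ϕ(y) = −y/108`. -/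
theorem monomial_solution_of_selfSimilar_ODE (c : ℝ) (hc : c ≠ 0) (n : ℕ)
    (h : ∀ y : ℝ, y^2 * (c * y^n) * deriv (fun t : ℝ => c * t^n) y
        + 4 * (c * y^n + 2 * y * deriv (fun t : ℝ => c * t^n) y)^3 = 0) :
    n = 1 ∧ c = -1/108 := by
  have hpoly : ∀ y : ℝ,
      c ^ 2 * n * y ^ (2 * n + 1) + 4 * c ^ 3 * (2 * n + 1) ^ 3 * y ^ (3 * n) = 0 :=
    fun y => selfSimilar_ODE_lhs_of_monomial c y n ▸ h y
  have hn : n = 1 := by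
    by_contra hn
    have hcoeff := (eq_zero_of_forall_mul_pow_add_mul_pow_eq_zero (by omega) hpoly).2
    exact absurd hcoeff (by positivity)
  subst hn
  have hc1 : c ^ 2 * (1 + 108 * c) = 0 := by linear_combination hpoly 1
  have h108 := (mul_eq_zero.mp hc1).resolve_left (pow_ne_zero 2 hc)
  exact ⟨rfl, by linarith⟩
end
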